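/- For dominant coweights λ̌, λ̌′ ∈ Λ̌⁺, the product of orbit sums satisfies z_{O(λ̌)} · z_{O(λ̌′)} − z_{O(λ̌+λ̌′)} ∈ F^{ℓ(λ̌+λ̌′)−1} R[Λ̌], i.e., it is a sum of basis elements e^{μ̌} with ℓ(μ̌) < ℓ(λ̌) + ℓ(λ̌′). -/

import Mathlib

/-!
The product `z_λ z_λ'` is the sum of `e^(μ + ν)` over the pairs `(μ, ν) ∈ Wλ × Wλ'`. Call such a
pair aligned if no root separates `μ` and `ν`, i.e. `⟨α, μ⟩⟨α, ν⟩ ≥ 0` for every root `α`. For a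
pair that is not aligned the triangle inequality for `ℓ` is strict, so
`ℓ(μ + ν) < ℓ(μ) + ℓ(ν) = ℓ(λ) + ℓ(λ') = ℓ(λ + λ')`. For an aligned pair, any `w ∈ W` making
`μ + ν` dominant makes `wμ` and `wν` dominant as well, hence `wμ = λ` and `wν = λ'` because a
`W`-orbit contains only one dominant coweight. So `(μ, ν) ↦ μ + ν` is a bijection from the aligned
pairs onto `W(λ + λ')`, and the aligned terms add up to exactly `z_(λ + λ')`.

A dominant element of a (finite) orbit is obtained by maximising `⟨2ρ, ·⟩` on it; its uniqueness
comes from the exchange condition for words in the simple reflections, proved from unbroken root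
strings.
-/

open Finset

namespace RootPairing

variable {ι X Xv : Type*} [AddCommGroup X] [AddCommGroup Xv] (P : RootPairing ι ℤ X Xv)

abbrev coweightWeylGroup : Subgroup (Xv ≃ₗ[ℤ] Xv) :=
  Subgroup.closure (Set.range P.flip.reflection)

abbrev coweightOrbit (x : Xv) : Set Xv := {y | ∃ w ∈ P.coweightWeylGroup, w x = y}

lemma root'_coreflection (i j : ι) (x : Xv) :
    P.root' i (P.coreflection j x) = P.root' (P.reflectionPerm j i) x :=
  P.flip.coroot'_reflection x

lemma toLinearMap_coreflection (m : X) (j : ι) (x : Xv) :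
    P.toLinearMap m (P.coreflection j x) =
      P.toLinearMap m x - P.root' j x * P.toLinearMap m (P.coroot j) := by
  simp [coreflection_apply]

lemma root'_reflectionPerm_self (i : ι) (x : Xv) :
    P.root' (P.reflectionPerm i i) x = - P.root' i x := by
  rw [root', root_reflectionPerm, reflection_apply_self, map_neg, LinearMap.neg_apply]

lemma coreflection_reflectionPerm_self (i : ι) :
    P.coreflection (P.reflectionPerm i i) = P.coreflection i := by
  ext x
  rw [coreflection_apply, coreflection_apply, root'_reflectionPerm_self, coroot_reflectionPerm,
    coreflection_apply_self]
  module

lemma reflectionPerm_self_self (i : ι) :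
    P.reflectionPerm (P.reflectionPerm i i) (P.reflectionPerm i i) = i :=
  P.indexNeg.neg_neg i

lemma coreflection_mul_self (i : ι) : P.coreflection i * P.coreflection i = 1 :=
  mul_eq_one_iff_eq_inv.mpr rfl

lemma coreflection_reflectionPerm (i j : ι) :
    P.coreflection (P.reflectionPerm j i) =
      P.coreflection j * P.coreflection i * P.coreflection j :=
  P.flip.reflection_reflectionPerm

lemma two_mul_rootForm_root_root [Fintype ι] (i j : ι) :
    2 * P.RootForm (P.root i) (P.root j) = P.pairing i j * P.RootForm (P.root j) (P.root j) :=
  (P.posRootForm ℤ).two_mul_apply_root_root i j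

lemma rootForm_root_self_pos [Fintype ι] (j : ι) : 0 < P.RootForm (P.root j) (P.root j) := by
  rw [rootForm_root_self]
  exact sum_pos' (fun i _ => mul_self_nonneg _) ⟨j, mem_univ j, by simp⟩

lemma root_add_zsmul_mem_range_of_mem_uIcc [Finite ι] {i j : ι}
    (hij : LinearIndependent ℤ ![P.root i, P.root j]) {z t : ℤ}
    (hz : P.root j + z • P.root i ∈ Set.range P.root) (ht : t ∈ Set.uIcc 0 z) :
    P.root j + t • P.root i ∈ Set.range P.root := by
  have h0 := (root_add_zsmul_mem_range_iff hij (z := 0)).1 (by simp)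
  rw [root_add_zsmul_mem_range_iff hij] at hz ⊢
  exact Set.uIcc_subset_Icc h0 hz ht

lemma exists_root_eq_add_nsmul {p : ι → Prop} {k : ι} (hk : p k) {d : X} {n : ℕ}
    (hroot : ∀ t ≤ n, P.root k + t • d ∈ Set.range P.root)
    (hstep : ∀ m m', p m → P.root m' = P.root m + d → p m') :
    ∃ m, p m ∧ P.root m = P.root k + n • d := by
  induction n with
  | zero => exact ⟨k, hk, by simp⟩
  | succ n ih =>
    obtain ⟨m, hm, hmk⟩ := ih fun t ht => hroot t (by omega)
    obtain ⟨m', hm'⟩ := hroot (n + 1) le_rfl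
    exact ⟨m', hstep m m' hm (by rw [hm', hmk, succ_nsmul, add_assoc]), hm'⟩

def wordMap (l : List ι) : Xv ≃ₗ[ℤ] Xv := (l.map P.coreflection).prod

def wordPerm (l : List ι) : Equiv.Perm ι := (l.map P.reflectionPerm).prod

@[simp] lemma wordMap_nil : P.wordMap [] = 1 := rfl

@[simp] lemma wordMap_cons (j : ι) (l : List ι) :
    P.wordMap (j :: l) = P.coreflection j * P.wordMap l := by
  simp [wordMap]

lemma wordMap_append (l l' : List ι) : P.wordMap (l ++ l') = P.wordMap l * P.wordMap l' := by
  simp [wordMap]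

@[simp] lemma wordPerm_cons (j : ι) (l : List ι) :
    P.wordPerm (j :: l) = P.reflectionPerm j * P.wordPerm l := by
  simp [wordPerm]

lemma wordMap_coroot (l : List ι) (i : ι) :
    P.wordMap l (P.coroot i) = P.coroot (P.wordPerm l i) := by
  induction l with
  | nil => rfl
  | cons j l ih => simp [ih, coroot_reflectionPerm]

lemma root'_wordPerm_wordMap (l : List ι) (i : ι) (x : Xv) :
    P.root' (P.wordPerm l i) (P.wordMap l x) = P.root' i x := by
  induction l with
  | nil => rfl
  | cons j l ih =>
    simp only [wordMap_cons, wordPerm_cons, LinearEquiv.mul_apply, Equiv.Perm.mul_apply,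
      root'_coreflection, reflectionPerm_self, ih]

lemma wordMap_mul_coreflection (l : List ι) (j : ι) :
    P.wordMap l * P.coreflection j = P.coreflection (P.wordPerm l j) * P.wordMap l := by
  ext x
  simp [coreflection_apply, wordMap_coroot, root'_wordPerm_wordMap]

lemma exists_wordMap_eq {w : Xv ≃ₗ[ℤ] Xv} (hw : w ∈ P.coweightWeylGroup) :
    ∃ l, P.wordMap l = w := by
  induction hw using Subgroup.closure_induction'' with
  | mem _ h => obtain ⟨i, rfl⟩ := h; exact ⟨[i], by simp; rfl⟩
  | inv_mem _ h => obtain ⟨i, rfl⟩ := h; exact ⟨[i], by simp; rfl⟩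
  | one => exact ⟨[], rfl⟩
  | mul _ _ _ _ h₁ h₂ =>
    obtain ⟨l₁, rfl⟩ := h₁
    obtain ⟨l₂, rfl⟩ := h₂
    exact ⟨l₁ ++ l₂, P.wordMap_append l₁ l₂⟩

lemma exists_perm_root'_apply {w : Xv ≃ₗ[ℤ] Xv} (hw : w ∈ P.coweightWeylGroup) :
    ∃ σ : Equiv.Perm ι, ∀ i x, P.root' (σ i) (w x) = P.root' i x := by
  obtain ⟨l, rfl⟩ := P.exists_wordMap_eq hw
  exact ⟨P.wordPerm l, P.root'_wordPerm_wordMap l⟩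

def Aligned (μ ν : Xv) : Prop := ∀ i, 0 ≤ P.root' i μ * P.root' i ν

variable {P}

lemma Aligned.weyl_apply {μ ν : Xv} (h : P.Aligned μ ν) {w : Xv ≃ₗ[ℤ] Xv}
    (hw : w ∈ P.coweightWeylGroup) : P.Aligned (w μ) (w ν) := by
  obtain ⟨σ, hσ⟩ := P.exists_perm_root'_apply hw
  intro i
  have := h (σ.symm i)
  rwa [← hσ _ μ, ← hσ _ ν, σ.apply_symm_apply] at this

section Length

variable [Fintype ι]

lemma sum_abs_root'_weyl_apply {w : Xv ≃ₗ[ℤ] Xv} (hw : w ∈ P.coweightWeylGroup) (x : Xv) :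
    ∑ i, |P.root' i (w x)| = ∑ i, |P.root' i x| := by
  obtain ⟨σ, hσ⟩ := P.exists_perm_root'_apply hw
  rw [← Equiv.sum_comp σ]
  simp only [hσ]

lemma sum_abs_root'_add_of_aligned {μ ν : Xv} (h : P.Aligned μ ν) :
    ∑ i, |P.root' i (μ + ν)| = ∑ i, |P.root' i μ| + ∑ i, |P.root' i ν| := by
  rw [← sum_add_distrib]
  refine sum_congr rfl fun i _ => ?_
  rw [map_add, abs_add_eq_add_abs_iff]
  exact mul_nonneg_iff.1 (h i)

lemma sum_abs_root'_add_lt_of_not_aligned {μ ν : Xv} (h : ¬ P.Aligned μ ν) :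
    ∑ i, |P.root' i (μ + ν)| < ∑ i, |P.root' i μ| + ∑ i, |P.root' i ν| := by
  obtain ⟨i, hi⟩ : ∃ i, ¬ 0 ≤ P.root' i μ * P.root' i ν := by simpa [Aligned] using h
  rw [← sum_add_distrib]
  refine sum_lt_sum (fun j _ => by rw [map_add]; exact abs_add_le _ _) ⟨i, mem_univ i, ?_⟩
  rw [map_add]
  refine (abs_add_le _ _).lt_of_ne fun he => hi ?_
  exact mul_nonneg_iff.2 ((abs_add_eq_add_abs_iff _ _).1 he)

end Length

variable (P)

/-- `P.reflectionPerm i i` is the index of `-α_i`. -/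
structure IsPositiveSystem (pos : Finset ι) : Prop where
  mem_iff_neg_notMem : ∀ i, i ∈ pos ↔ P.reflectionPerm i i ∉ pos
  mem_of_root_eq_add : ∀ i ∈ pos, ∀ j ∈ pos, ∀ k, P.root k = P.root i + P.root j → k ∈ pos

def IsSimple (pos : Finset ι) (j : ι) : Prop :=
  j ∈ pos ∧ ∀ a ∈ pos, ∀ b ∈ pos, P.root j ≠ P.root a + P.root b

def IsDominant (pos : Finset ι) (x : Xv) : Prop := ∀ i ∈ pos, 0 ≤ P.root' i x

def posRootSum (pos : Finset ι) : X := ∑ i ∈ pos, P.root i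

variable {P}

lemma Aligned.isDominant {pos : Finset ι} {μ ν : Xv} (h : P.Aligned μ ν)
    (hd : P.IsDominant pos (μ + ν)) : P.IsDominant pos μ ∧ P.IsDominant pos ν := by
  refine ⟨fun i hi => ?_, fun i hi => ?_⟩ <;>
  · have := hd i hi
    have := h i
    rw [map_add] at *
    nlinarith

namespace IsPositiveSystem

variable {pos : Finset ι} (hS : P.IsPositiveSystem pos)
include hS

lemma neg_notMem {i : ι} (hi : i ∈ pos) : P.reflectionPerm i i ∉ pos :=
  (hS.mem_iff_neg_notMem i).1 hi

lemma neg_mem {i : ι} (hi : i ∉ pos) : P.reflectionPerm i i ∈ pos := by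
  by_contra h
  exact hi ((hS.mem_iff_neg_notMem i).2 h)

lemma root'_nonpos_of_notMem {x : Xv} (hx : P.IsDominant pos x) {i : ι} (hi : i ∉ pos) :
    P.root' i x ≤ 0 := by
  have := hx _ (hS.neg_mem hi)
  rw [root'_reflectionPerm_self] at this
  omega

lemma aligned_of_isDominant {x y : Xv} (hx : P.IsDominant pos x) (hy : P.IsDominant pos y) :
    P.Aligned x y := fun i => by
  by_cases hi : i ∈ pos
  · exact mul_nonneg (hx i hi) (hy i hi)
  · exact mul_nonneg_of_nonpos_of_nonpos (hS.root'_nonpos_of_notMem hx hi)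
      (hS.root'_nonpos_of_notMem hy hi)

lemma linearIndependent [P.IsReduced] {i j : ι} (hi : i ∈ pos) (hj : j ∈ pos) (hij : i ≠ j) :
    LinearIndependent ℤ ![P.root i, P.root j] :=
  IsReduced.linearIndependent P hij fun h => hS.neg_notMem hj ((P.root_eq_neg_iff).1 h ▸ hi)

lemma two_mul_sum_abs_root' [Fintype ι] (x : Xv) :
    2 * ∑ i ∈ pos, |P.root' i x| = ∑ i, |P.root' i x| := by
  classical
  rw [← sum_add_sum_compl pos, two_mul]
  congr 1
  refine sum_nbij' (fun i => P.reflectionPerm i i) (fun i => P.reflectionPerm i i)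
    (fun i hi => by simpa using hS.neg_notMem hi) (fun i hi => hS.neg_mem (by simpa using hi))
    (fun i _ => P.reflectionPerm_self_self i) (fun i _ => P.reflectionPerm_self_self i)
    (fun i _ => by rw [root'_reflectionPerm_self, abs_neg])

lemma reflectionPerm_mem_of_pairing_nonpos [Fintype ι] [P.IsReduced] {j k : ι} (hj : j ∈ pos)
    (hk : k ∈ pos) (hkj : P.pairing k j ≤ 0) : P.reflectionPerm j k ∈ pos := by
  have hne : j ≠ k := by rintro rfl; simp at hkj
  set n := (-P.pairing k j).toNat
  have hroot : P.root (P.reflectionPerm j k) = P.root k + (n : ℤ) • P.root j := by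
    rw [root_reflectionPerm, reflection_apply_root, Int.toNat_of_nonneg (by omega)]
    module
  obtain ⟨m, hm, hmk⟩ := P.exists_root_eq_add_nsmul (p := (· ∈ pos)) (n := n) hk
    (fun t ht => by
      rw [← natCast_zsmul]
      exact P.root_add_zsmul_mem_range_of_mem_uIcc (hS.linearIndependent hj hk hne) ⟨_, hroot⟩
        (Set.mem_uIcc_of_le (by omega) (by omega)))
    (fun m m' hm h => hS.mem_of_root_eq_add m hm j hj m' h)
  rw [← natCast_zsmul, ← hroot, P.root.injective.eq_iff] at hmk
  exact hmk ▸ hm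

lemma reflectionPerm_mem_of_isSimple [Fintype ι] [P.IsReduced] {j k : ι}
    (hj : P.IsSimple pos j) (hk : k ∈ pos) (hkj : k ≠ j) : P.reflectionPerm j k ∈ pos := by
  rcases le_or_gt (P.pairing k j) 0 with hkj' | hkj'
  · exact hS.reflectionPerm_mem_of_pairing_nonpos hj.1 hk hkj'
  set n := (P.pairing k j).toNat
  have hroot : P.root (P.reflectionPerm j k) = P.root k + (-(n : ℤ)) • P.root j := by
    rw [root_reflectionPerm, reflection_apply_root, Int.toNat_of_nonneg hkj'.le]
    module
  -- a step down the `j`-string leaving `pos` would write `α_j` as a sum of two positive roots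
  obtain ⟨m, hm, hmk⟩ := P.exists_root_eq_add_nsmul (p := (· ∈ pos)) (n := n) (d := -P.root j) hk
    (fun t ht => by
      rw [smul_neg, ← natCast_zsmul, ← neg_smul]
      exact P.root_add_zsmul_mem_range_of_mem_uIcc (hS.linearIndependent hj.1 hk hkj.symm)
        ⟨_, hroot⟩ (Set.mem_uIcc_of_ge (by omega) (by omega)))
    (fun m m' hm h => by
      by_contra hm'
      refine hj.2 m hm _ (hS.neg_mem hm') ?_
      rw [root_reflectionPerm, reflection_apply_self, h]
      abel)
  rw [smul_neg, ← natCast_zsmul, ← neg_smul, ← hroot, P.root.injective.eq_iff] at hmk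
  exact hmk ▸ hm

lemma posRootSum_coroot_pos [Fintype ι] [P.IsReduced] {j : ι} (hj : j ∈ pos) :
    0 < P.toLinearMap (P.posRootSum pos) (P.coroot j) := by
  classical
  simp only [posRootSum, map_sum, LinearMap.sum_apply, root_coroot_eq_pairing]
  rw [← sum_filter_add_sum_filter_not pos (fun k => P.reflectionPerm j k ∈ pos)]
  -- `s_j` pairs off the roots it keeps positive, with opposite pairings against `α̌_j`
  have hzero : ∑ k ∈ pos with P.reflectionPerm j k ∈ pos, P.pairing k j = 0 := by
    have hneg (k : ι) : P.pairing (P.reflectionPerm j k) j = - P.pairing k j := by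
      rw [← pairing_reflectionPerm, pairing_reflectionPerm_self_right]
    refine sum_involution (fun k _ => P.reflectionPerm j k) (fun k _ => by rw [hneg, add_neg_cancel])
      (fun k _ hk h => hk ?_) (fun k hk => ?_) (fun k _ => reflectionPerm_self P j k)
    · have := hneg k
      rw [h] at this
      omega
    · simp only [mem_filter, reflectionPerm_self] at hk ⊢
      exact ⟨hk.2, hk.1⟩
  rw [hzero, zero_add]
  refine sum_pos (fun k hk => ?_) ⟨j, by simp [hj, hS.neg_notMem hj]⟩
  rw [mem_filter] at hk
  by_contra h
  exact hk.2 (hS.reflectionPerm_mem_of_pairing_nonpos hj hk.1 (not_lt.1 h))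

lemma exists_isDominant [Fintype ι] [P.IsReduced] {x : Xv}
    (hx : (P.coweightOrbit x).Finite) :
    ∃ w ∈ P.coweightWeylGroup, P.IsDominant pos (w x) := by
  -- a maximiser of `⟨2ρ, ·⟩` on the orbit is dominant, since `s_i` raises it when `⟨α_i, y⟩ < 0`
  obtain ⟨_, ⟨w, hw, rfl⟩, hmax⟩ :=
    Set.exists_max_image _ (P.toLinearMap (P.posRootSum pos)) hx ⟨x, 1, one_mem _, rfl⟩
  refine ⟨w, hw, fun i hi => not_lt.1 fun hneg => ?_⟩
  have := hmax _ ⟨P.coreflection i * w, mul_mem (Subgroup.subset_closure ⟨i, rfl⟩) hw, rfl⟩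
  rw [LinearEquiv.mul_apply, toLinearMap_coreflection] at this
  nlinarith [hS.posRootSum_coroot_pos hi]

lemma rootForm_posRootSum_root_pos [Fintype ι] [P.IsReduced] {k : ι} (hk : k ∈ pos) :
    0 < P.RootForm (P.posRootSum pos) (P.root k) := by
  have h2 : 2 * P.RootForm (P.posRootSum pos) (P.root k) =
      P.toLinearMap (P.posRootSum pos) (P.coroot k) * P.RootForm (P.root k) (P.root k) := by
    simp only [posRootSum, map_sum, LinearMap.sum_apply, mul_sum, sum_mul,
      two_mul_rootForm_root_root, root_coroot_eq_pairing]
  nlinarith [hS.posRootSum_coroot_pos hk, P.rootForm_root_self_pos k]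

lemma root_mem_closure_isSimple [Fintype ι] [P.IsReduced] {k : ι} (hk : k ∈ pos) :
    P.root k ∈ AddSubmonoid.closure (P.root '' {j | P.IsSimple pos j}) := by
  induction hn : (P.RootForm (P.posRootSum pos) (P.root k)).toNat
    using Nat.strong_induction_on generalizing k with
  | _ n ih =>
  by_cases hs : P.IsSimple pos k
  · exact AddSubmonoid.subset_closure ⟨k, hs, rfl⟩
  obtain ⟨a, ha, b, hb, hab⟩ : ∃ a ∈ pos, ∃ b ∈ pos, P.root k = P.root a + P.root b := by
    simpa [IsSimple, hk] using hs
  have hsum : P.RootForm (P.posRootSum pos) (P.root k) =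
      P.RootForm (P.posRootSum pos) (P.root a) + P.RootForm (P.posRootSum pos) (P.root b) := by
    rw [hab, map_add]
  have := hS.rootForm_posRootSum_root_pos ha
  have := hS.rootForm_posRootSum_root_pos hb
  rw [hab]
  exact add_mem (ih _ (by omega) ha rfl) (ih _ (by omega) hb rfl)

lemma exists_isSimple_pos_of_pos [Fintype ι] [P.IsReduced] (f : X →+ ℤ) {k : ι} (hk : k ∈ pos)
    (hf : 0 < f (P.root k)) : ∃ j, P.IsSimple pos j ∧ 0 < f (P.root j) := by
  by_contra! h
  have hle : ∀ v ∈ AddSubmonoid.closure (P.root '' {j | P.IsSimple pos j}), f v ≤ 0 := by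
    intro v hv
    induction hv using AddSubmonoid.closure_induction with
    | mem _ hv => obtain ⟨j, hj, rfl⟩ := hv; exact h j hj
    | zero => simp
    | add _ _ _ _ h₁ h₂ => rw [map_add]; omega
  exact (hle _ (hS.root_mem_closure_isSimple hk)).not_gt hf

lemma exists_isSimple_pairing_pos [Fintype ι] [P.IsReduced] {k : ι} (hk : k ∈ pos) :
    ∃ j, P.IsSimple pos j ∧ 0 < P.pairing k j := by
  obtain ⟨j, hj, hkj⟩ := hS.exists_isSimple_pos_of_pos (P.RootForm (P.root k)).toAddMonoidHom hk
    (P.rootForm_root_self_pos k)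
  simp only [LinearMap.toAddMonoidHom_coe] at hkj
  exact ⟨j, hj, by nlinarith [P.two_mul_rootForm_root_root k j, P.rootForm_root_self_pos j]⟩

lemma exists_simple_word_eq_coreflection [Fintype ι] [P.IsReduced] {k : ι} (hk : k ∈ pos) :
    ∃ l : List ι, (∀ a ∈ l, P.IsSimple pos a) ∧ P.wordMap l = P.coreflection k := by
  induction hn : (P.RootForm (P.posRootSum pos) (P.root k)).toNat
    using Nat.strong_induction_on generalizing k with
  | _ n ih =>
  by_cases hs : P.IsSimple pos k
  · exact ⟨[k], by simpa using hs, by simp⟩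
  obtain ⟨j, hj, hkj⟩ := hS.exists_isSimple_pairing_pos hk
  have hk' := hS.reflectionPerm_mem_of_isSimple hj hk fun h => hs (h ▸ hj)
  have hdrop : P.RootForm (P.posRootSum pos) (P.root (P.reflectionPerm j k)) =
      P.RootForm (P.posRootSum pos) (P.root k) -
        P.pairing k j * P.RootForm (P.posRootSum pos) (P.root j) := by
    rw [root_reflectionPerm, reflection_apply_root, map_sub, map_smul, smul_eq_mul]
  have := mul_pos hkj (hS.rootForm_posRootSum_root_pos hj.1)
  have := hS.rootForm_posRootSum_root_pos hk'
  obtain ⟨l, hl, hwl⟩ := ih _ (by omega) hk' rfl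
  refine ⟨j :: l ++ [j], ?_, ?_⟩
  · simp only [List.cons_append, List.mem_cons, List.mem_append, List.not_mem_nil, or_false]
    rintro a (rfl | ha | rfl)
    exacts [hj, hl a ha, hj]
  · rw [List.cons_append, wordMap_cons, wordMap_append, hwl, coreflection_reflectionPerm]
    simp only [wordMap_cons, wordMap_nil, mul_one, ← mul_assoc, coreflection_mul_self, one_mul]
    rw [mul_assoc, coreflection_mul_self, mul_one]

lemma exists_simple_word_eq [Fintype ι] [P.IsReduced] (l : List ι) :
    ∃ l' : List ι, (∀ a ∈ l', P.IsSimple pos a) ∧ P.wordMap l' = P.wordMap l := by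
  induction l with
  | nil => exact ⟨[], by simp, rfl⟩
  | cons i l ih =>
    obtain ⟨l', hl', hw⟩ := ih
    obtain ⟨m, hm, hwm⟩ : ∃ m : List ι, (∀ a ∈ m, P.IsSimple pos a) ∧
        P.wordMap m = P.coreflection i := by
      by_cases hi : i ∈ pos
      · exact hS.exists_simple_word_eq_coreflection hi
      · rw [← coreflection_reflectionPerm_self]
        exact hS.exists_simple_word_eq_coreflection (hS.neg_mem hi)
    exact ⟨m ++ l', fun a ha => (List.mem_append.1 ha).elim (hm a) (hl' a),
      by rw [wordMap_append, hwm, hw, wordMap_cons]⟩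

/-- The exchange condition. -/
lemma exists_shorter_word_eq_mul_coreflection [Fintype ι] [P.IsReduced] {l : List ι}
    (hl : ∀ a ∈ l, P.IsSimple pos a) {j : ι} (hj : j ∈ pos) (hneg : P.wordPerm l j ∉ pos) :
    ∃ m : List ι, (∀ a ∈ m, P.IsSimple pos a) ∧ m.length < l.length ∧
      P.wordMap m = P.wordMap l * P.coreflection j := by
  induction l with
  | nil => exact absurd hj hneg
  | cons a t ih =>
    have ha := hl a List.mem_cons_self
    have ht : ∀ b ∈ t, P.IsSimple pos b := fun b hb => hl b (List.mem_cons_of_mem a hb)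
    by_cases hpos : P.wordPerm t j ∈ pos
    · have hta : P.wordPerm t j = a := by
        by_contra hne
        exact hneg (by simpa using hS.reflectionPerm_mem_of_isSimple ha hpos hne)
      refine ⟨t, ht, by simp, ?_⟩
      rw [wordMap_cons, mul_assoc, wordMap_mul_coreflection, hta, ← mul_assoc,
        coreflection_mul_self, one_mul]
    · obtain ⟨m, hm, hlen, hwm⟩ := ih ht hpos
      refine ⟨a :: m, ?_, by simpa using hlen, by rw [wordMap_cons, wordMap_cons, hwm, mul_assoc]⟩
      rintro b (_ | ⟨_, hb⟩)
      exacts [ha, hm b hb]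

lemma wordMap_apply_eq_self_of_isDominant [Fintype ι] [P.IsReduced] {l : List ι}
    (hl : ∀ a ∈ l, P.IsSimple pos a) {x : Xv} (hx : P.IsDominant pos x)
    (hlx : P.IsDominant pos (P.wordMap l x)) : P.wordMap l x = x := by
  induction hn : l.length using Nat.strong_induction_on generalizing l with
  | _ n ih =>
  obtain rfl | ⟨l, j, rfl⟩ := l.eq_nil_or_concat'
  · rfl
  have hj := (hl j (by simp)).1
  have hl' : ∀ a ∈ l, P.IsSimple pos a := fun a ha => hl a (by simp [ha])
  have hsplit : P.wordMap (l ++ [j]) x = P.wordMap l (P.coreflection j x) := by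
    simp [wordMap_append]
  subst hn
  by_cases hr : P.wordPerm l j ∈ pos
  · -- `x` lies on the wall of `α_j`, so the last letter acts trivially
    have hwall : P.root' j x = 0 := by
      have := hlx _ hr
      rw [hsplit, root'_wordPerm_wordMap, root'_coreflection, root'_reflectionPerm_self] at this
      have := hx j hj
      omega
    rw [hsplit, coreflection_apply, hwall, zero_smul, sub_zero] at hlx ⊢
    exact ih _ (by simp) hl' hlx rfl
  · obtain ⟨m, hm, hlen, hwm⟩ := hS.exists_shorter_word_eq_mul_coreflection hl' hj hr
    have hm' : P.wordMap (l ++ [j]) = P.wordMap m := by simp [wordMap_append, hwm]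
    rw [hm'] at hlx ⊢
    exact ih _ (by simp; omega) hm hlx rfl

lemma weyl_apply_eq_self_of_isDominant [Fintype ι] [P.IsReduced] {w : Xv ≃ₗ[ℤ] Xv}
    (hw : w ∈ P.coweightWeylGroup) {x : Xv} (hx : P.IsDominant pos x)
    (hwx : P.IsDominant pos (w x)) : w x = x := by
  obtain ⟨l, rfl⟩ := P.exists_wordMap_eq hw
  obtain ⟨l', hl', hw'⟩ := hS.exists_simple_word_eq l
  rw [← hw'] at hwx ⊢
  exact hS.wordMap_apply_eq_self_of_isDominant hl' hx hwx

lemma weyl_apply_eq_of_aligned [Fintype ι] [P.IsReduced] {lam lam' μ ν : Xv}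
    (hlam : P.IsDominant pos lam) (hlam' : P.IsDominant pos lam') (hμ : μ ∈ P.coweightOrbit lam)
    (hν : ν ∈ P.coweightOrbit lam') (h : P.Aligned μ ν) {w : Xv ≃ₗ[ℤ] Xv}
    (hw : w ∈ P.coweightWeylGroup) (hd : P.IsDominant pos (w (μ + ν))) :
    w μ = lam ∧ w ν = lam' := by
  obtain ⟨u, hu, rfl⟩ := hμ
  obtain ⟨v, hv, rfl⟩ := hν
  rw [map_add] at hd
  obtain ⟨h₁, h₂⟩ := (h.weyl_apply hw).isDominant hd
  exact ⟨hS.weyl_apply_eq_self_of_isDominant (mul_mem hw hu) hlam h₁,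
    hS.weyl_apply_eq_self_of_isDominant (mul_mem hw hv) hlam' h₂⟩

lemma bijOn_add_aligned [Fintype ι] [P.IsReduced] (hfin : ∀ x, (P.coweightOrbit x).Finite)
    {lam lam' : Xv} (hlam : P.IsDominant pos lam) (hlam' : P.IsDominant pos lam') :
    Set.BijOn (fun q : Xv × Xv => q.1 + q.2)
      {q | q.1 ∈ P.coweightOrbit lam ∧ q.2 ∈ P.coweightOrbit lam' ∧ P.Aligned q.1 q.2}
      (P.coweightOrbit (lam + lam')) := by
  refine ⟨?_, ?_, ?_⟩
  · rintro ⟨μ, ν⟩ ⟨hμ, hν, h⟩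
    obtain ⟨w, hw, hd⟩ := hS.exists_isDominant (hfin (μ + ν))
    obtain ⟨h₁, h₂⟩ := hS.weyl_apply_eq_of_aligned hlam hlam' hμ hν h hw hd
    refine ⟨w⁻¹, inv_mem hw, ?_⟩
    rw [← h₁, ← h₂, ← map_add, ← LinearEquiv.mul_apply, inv_mul_cancel]
    rfl
  · rintro ⟨μ, ν⟩ ⟨hμ, hν, h⟩ ⟨μ', ν'⟩ ⟨hμ', hν', h'⟩ (heq : μ + ν = μ' + ν')
    obtain ⟨w, hw, hd⟩ := hS.exists_isDominant (hfin (μ + ν))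
    have e := (hS.weyl_apply_eq_of_aligned hlam hlam' hμ hν h hw hd).1
    have e' := (hS.weyl_apply_eq_of_aligned hlam hlam' hμ' hν' h' hw (heq ▸ hd)).1
    obtain rfl : μ = μ' := w.injective (e.trans e'.symm)
    rw [add_left_cancel heq]
  · rintro _ ⟨w, hw, rfl⟩
    exact ⟨(w lam, w lam'), ⟨⟨w, hw, rfl⟩, ⟨w, hw, rfl⟩,
      (hS.aligned_of_isDominant hlam hlam').weyl_apply hw⟩, (map_add w _ _).symm⟩

lemma sum_filter_aligned_eq [Fintype ι] [P.IsReduced] (hfin : ∀ x, (P.coweightOrbit x).Finite)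
    {lam lam' : Xv} (hlam : P.IsDominant pos lam) (hlam' : P.IsDominant pos lam')
    [DecidablePred fun q : Xv × Xv => P.Aligned q.1 q.2] {M : Type*} [AddCommMonoid M]
    (f : Xv → M) :
    ∑ q ∈ (hfin lam).toFinset ×ˢ (hfin lam').toFinset with P.Aligned q.1 q.2, f (q.1 + q.2) =
      ∑ η ∈ (hfin (lam + lam')).toFinset, f η := by
  have hbij := hS.bijOn_add_aligned hfin hlam hlam'
  have hdom : ((((hfin lam).toFinset ×ˢ (hfin lam').toFinset).filter
      fun q => P.Aligned q.1 q.2 : Finset (Xv × Xv)) : Set (Xv × Xv)) =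
      {q | q.1 ∈ P.coweightOrbit lam ∧ q.2 ∈ P.coweightOrbit lam' ∧ P.Aligned q.1 q.2} := by
    ext
    simp [and_assoc]
  refine sum_nbij _ (fun q hq => ?_) (hdom ▸ hbij.injOn) ?_ fun _ _ => rfl
  · rw [← mem_coe, hdom] at hq
    simpa using hbij.mapsTo hq
  · rw [hdom, Set.Finite.coe_toFinset]
    exact hbij.surjOn

lemma sum_abs_root'_add_lt [Fintype ι] {lam lam' μ ν : Xv} (hlam : P.IsDominant pos lam)
    (hlam' : P.IsDominant pos lam') (hμ : μ ∈ P.coweightOrbit lam) (hν : ν ∈ P.coweightOrbit lam')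
    (h : ¬ P.Aligned μ ν) :
    ∑ i ∈ pos, |P.root' i (μ + ν)| < ∑ i ∈ pos, |P.root' i (lam + lam')| := by
  obtain ⟨u, hu, rfl⟩ := hμ
  obtain ⟨v, hv, rfl⟩ := hν
  have := sum_abs_root'_add_lt_of_not_aligned h
  rw [sum_abs_root'_weyl_apply hu, sum_abs_root'_weyl_apply hv,
    ← sum_abs_root'_add_of_aligned (hS.aligned_of_isDominant hlam hlam')] at this
  have := hS.two_mul_sum_abs_root' (u lam + v lam')
  have := hS.two_mul_sum_abs_root' (lam + lam')
  omega

end IsPositiveSystem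

end RootPairing

theorem stmt17_general {R : Type*} [CommRing R] {ι X Xv : Type*} [Fintype ι]
    [AddCommGroup X] [AddCommGroup Xv]
    (P : RootPairing ι ℤ X Xv) (hred : P.IsReduced)
    (pos : Finset ι) (hpos : ∀ i, i ∈ pos ↔ P.reflectionPerm i i ∉ pos)
    (hadd : ∀ i ∈ pos, ∀ j ∈ pos, ∀ k, P.root k = P.root i + P.root j → k ∈ pos)
    (ℓ : Xv → ℤ) (hℓ : ∀ v, ℓ v = ∑ i ∈ pos, |P.toLinearMap (P.root i) v|)
    (hfin : ∀ x : Xv, {y | ∃ w ∈ (Subgroup.closure (Set.range P.flip.reflection) : Subgroup (Xv ≃ₗ[ℤ] Xv)), w x = y}.Finite)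
    (z : Xv → AddMonoidAlgebra R Xv)
    (hz : ∀ lam, z lam = ∑ μ ∈ (hfin lam).toFinset, AddMonoidAlgebra.single μ (1 : R))
    (lam lam' : Xv) (hlam : ∀ i ∈ pos, 0 ≤ P.toLinearMap (P.root i) lam)
    (hlam' : ∀ i ∈ pos, 0 ≤ P.toLinearMap (P.root i) lam') :
    z lam * z lam' - z (lam + lam') ∈
      Submodule.span R {f : AddMonoidAlgebra R Xv |
        ∃ μ : Xv, ℓ μ ≤ ℓ (lam + lam') - 1 ∧ f = AddMonoidAlgebra.single μ (1 : R)} := by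
  classical
  have : P.IsReduced := hred
  have hS : P.IsPositiveSystem pos := ⟨hpos, hadd⟩
  have hprod : z lam * z lam' = ∑ q ∈ (hfin lam).toFinset ×ˢ (hfin lam').toFinset,
      AddMonoidAlgebra.single (q.1 + q.2) (1 : R) := by
    simp only [hz, sum_mul_sum, sum_product, AddMonoidAlgebra.single_mul_single, one_mul]
  rw [hprod, ← sum_filter_add_sum_filter_not _ fun q => P.Aligned q.1 q.2,
    hS.sum_filter_aligned_eq hfin hlam hlam' fun η => AddMonoidAlgebra.single η (1 : R), ← hz,
    add_sub_cancel_left]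
  refine Submodule.sum_mem _ fun q hq => Submodule.subset_span ⟨q.1 + q.2, ?_, rfl⟩
  simp only [mem_filter, mem_product, Set.Finite.mem_toFinset] at hq
  have := hS.sum_abs_root'_add_lt hlam hlam' hq.1.1 hq.1.2 hq.2
  rw [hℓ, hℓ]
  exact Int.le_sub_one_of_lt this

/-- For dominant coweights `λ̌, λ̌′ ∈ Λ̌⁺`, the product of orbit sums satisfies
`z_{O(λ̌)} · z_{O(λ̌′)} − z_{O(λ̌+λ̌′)} ∈ F^{ℓ(λ̌+λ̌′)−1} R[Λ̌]`, i.e. it is a sum of basis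
elements `e^{μ̌}` with `ℓ(μ̌) < ℓ(λ̌) + ℓ(λ̌′)`.  Here `z_{O(λ̌)} = Σ_{μ̌ ∈ O(λ̌)} e^{μ̌}`
are the `W₀`-orbit sums in the group algebra `AddMonoidAlgebra R Xv`, `ℓ` is the length
function and `F^i` the span of the `e^{x̌}` with `ℓ(x̌) ≤ i`. -/
theorem stmt17 {R : Type*} [CommRing R] {ι X Xv : Type*} [Fintype ι]
    [AddCommGroup X] [AddCommGroup Xv]
    (P : RootPairing ι ℤ X Xv) (hred : P.IsReduced)
    [Finite (Subgroup.closure (Set.range P.flip.reflection) : Subgroup (Xv ≃ₗ[ℤ] Xv))]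
    (pos : Finset ι) (hpos : ∀ i, i ∈ pos ↔ P.reflectionPerm i i ∉ pos)
    (hadd : ∀ i ∈ pos, ∀ j ∈ pos, ∀ k, P.root k = P.root i + P.root j → k ∈ pos)
    (ℓ : Xv → ℤ) (hℓ : ∀ v, ℓ v = ∑ i ∈ pos, |P.toLinearMap (P.root i) v|)
    (hfin : ∀ x : Xv, {y | ∃ w ∈ (Subgroup.closure (Set.range P.flip.reflection) : Subgroup (Xv ≃ₗ[ℤ] Xv)), w x = y}.Finite)
    (z : Xv → AddMonoidAlgebra R Xv)
    (hz : ∀ lam, z lam = ∑ μ ∈ (hfin lam).toFinset, AddMonoidAlgebra.single μ (1 : R))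
    (lam lam' : Xv) (hlam : ∀ i ∈ pos, 0 ≤ P.toLinearMap (P.root i) lam)
    (hlam' : ∀ i ∈ pos, 0 ≤ P.toLinearMap (P.root i) lam') :
    z lam * z lam' - z (lam + lam') ∈
      Submodule.span R {f : AddMonoidAlgebra R Xv |
        ∃ μ : Xv, ℓ μ ≤ ℓ (lam + lam') - 1 ∧ f = AddMonoidAlgebra.single μ (1 : R)} :=
  stmt17_general P hred pos hpos hadd ℓ hℓ hfin z hz lam lam' hlam hlam'
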